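/- arXiv:1809.08041 — 2 statements merged into one kernel-verified Lean document; each statement's English description precedes it below -/
import Mathlib

section
/- For every p ∈ {2, 3, 5} there exists a non-singular cubic form F ∈ ℤ[x_1,…,x_11] in 11 variables such that the hypersurface F = 0 does not contain a line over ℚ_p; that is, there do not exist linearly independent vectors x, y ∈ ℚ_p^11 with F(s•x + t•y) = 0 for all s, t ∈ ℚ_p. -/
/-!
The witness is `F = G(x₀, …, x₈) + x₉³ + x₁₀³` with
`G = S(x₀, x₁, x₂) + p S(x₃, x₄, x₅) + p² S(x₆, x₇, x₈)`, where the ternary cubic `S` is congruent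
modulo 30 to the norm form of `ℚ(θ)`, `θ³ + 11θ + 1 = 0`, a cubic field in which 2, 3 and 5 are
inert. So `S` has no nontrivial zero modulo `p`, which gives `‖S(a,b,c)‖ = max(‖a‖,‖b‖,‖c‖)³` on
`ℚ_p`; the three blocks of `G` then have norms in distinct cosets of `p^{3ℤ}`, and by the
ultrametric inequality `G` has no nontrivial zero over `ℚ_p`. On a plane contained in `F = 0`, the
map `v ↦ (v₉, v₁₀)` is therefore injective, hence onto, so the plane contains `u, w` with
`(u₉, u₁₀) = (1, 0)` and `(w₉, w₁₀) = (0, 1)`. Now `F(u - w) = G(u - w)` forces `u` and `w` to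
agree in the first nine coordinates, and then `F(u + w) = 8 G(u) + 2 = -6`.
Non-singularity over `ℂ` reduces to that of `S`.
-/

open MvPolynomial

namespace SmoothCubicNoLine

lemma IsUltrametricDist.eq_zero_of_add_add_eq_zero {M : Type*} [NormedAddCommGroup M]
    [IsUltrametricDist M] {a b c : M} (h : a + b + c = 0) (hab : ‖a‖ = ‖b‖ → a = 0)
    (hac : ‖a‖ = ‖c‖ → a = 0) (hbc : ‖b‖ = ‖c‖ → b = 0) : a = 0 ∧ b = 0 ∧ c = 0 := by
  have hc : c = -(a + b) := eq_neg_of_add_eq_zero_right h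
  by_cases hnorm : ‖a‖ = ‖b‖
  · have ha := hab hnorm
    have hb : b = 0 := norm_eq_zero.mp (by rw [← hnorm, ha, norm_zero])
    exact ⟨ha, hb, by simp [hc, ha, hb]⟩
  · exfalso
    have hmax : ‖c‖ = max ‖a‖ ‖b‖ := by
      rw [hc, norm_neg, IsUltrametricDist.norm_add_eq_max_of_norm_ne_norm hnorm]
    rcases max_choice ‖a‖ ‖b‖ with hm | hm
    · have ha := hac (by rw [hmax, hm])
      have hc0 : c = 0 := norm_eq_zero.mp (by rw [hmax, hm, ha, norm_zero])
      exact hnorm (by simp [ha, show b = 0 by simpa [ha, hc0] using h])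
    · have hb := hbc (by rw [hmax, hm])
      have hc0 : c = 0 := norm_eq_zero.mp (by rw [hmax, hm, hb, norm_zero])
      exact hnorm (by simp [hb, show a = 0 by simpa [hb, hc0] using h])

lemma exists_norm_eq_max_max {E : Type*} [Norm E] (a b c : E) :
    ∃ z, (z = a ∨ z = b ∨ z = c) ∧ ‖z‖ = max ‖a‖ (max ‖b‖ ‖c‖) := by
  rcases max_choice ‖a‖ (max ‖b‖ ‖c‖) with h | h
  · exact ⟨a, .inl rfl, h.symm⟩
  rcases max_choice ‖b‖ ‖c‖ with h' | h'
  · exact ⟨b, .inr (.inl rfl), by rw [h, h']⟩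
  · exact ⟨c, .inr (.inr rfl), by rw [h, h']⟩

lemma isHomogeneous_natCast {R σ : Type*} [CommRing R] (n : ℕ) :
    (n : MvPolynomial σ R).IsHomogeneous 0 := by
  rw [← map_natCast (C : R →+* MvPolynomial σ R)]
  exact isHomogeneous_C σ _

section TernaryCubic

variable {R : Type*} [CommRing R]

/-- `N(a + bθ + cθ²) + 30 (a³ + b³ + c³)`, where `N` is the norm of `ℚ(θ)/ℚ`, `θ³ + 11θ + 1 = 0`. -/
def ternaryCubic (a b c : R) : R :=
  31 * a ^ 3 + 29 * b ^ 3 + 31 * c ^ 3 - 11 * b * c ^ 2 + 121 * a * c ^ 2 + 3 * a * b * c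
    + 11 * a * b ^ 2 - 22 * a ^ 2 * c

def ternaryCubicDerivA (a b c : R) : R :=
  93 * a ^ 2 + 11 * b ^ 2 + 121 * c ^ 2 + 3 * b * c - 44 * a * c

def ternaryCubicDerivB (a b c : R) : R :=
  87 * b ^ 2 - 11 * c ^ 2 + 22 * a * b + 3 * a * c

def ternaryCubicDerivC (a b c : R) : R :=
  93 * c ^ 2 - 22 * a ^ 2 + 242 * a * c + 3 * a * b - 22 * b * c

lemma map_ternaryCubic {S : Type*} [CommRing S] (f : R →+* S) (a b c : R) :
    f (ternaryCubic a b c) = ternaryCubic (f a) (f b) (f c) := by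
  simp only [ternaryCubic, map_add, map_sub, map_mul, map_pow, map_ofNat]

lemma map_ternaryCubicDerivA {S : Type*} [CommRing S] (f : R →+* S) (a b c : R) :
    f (ternaryCubicDerivA a b c) = ternaryCubicDerivA (f a) (f b) (f c) := by
  simp only [ternaryCubicDerivA, map_add, map_sub, map_mul, map_pow, map_ofNat]

lemma map_ternaryCubicDerivB {S : Type*} [CommRing S] (f : R →+* S) (a b c : R) :
    f (ternaryCubicDerivB a b c) = ternaryCubicDerivB (f a) (f b) (f c) := by
  simp only [ternaryCubicDerivB, map_add, map_sub, map_mul, map_pow, map_ofNat]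

lemma map_ternaryCubicDerivC {S : Type*} [CommRing S] (f : R →+* S) (a b c : R) :
    f (ternaryCubicDerivC a b c) = ternaryCubicDerivC (f a) (f b) (f c) := by
  simp only [ternaryCubicDerivC, map_add, map_sub, map_mul, map_pow, map_ofNat]

lemma ternaryCubic_mul (k a b c : R) :
    ternaryCubic (k * a) (k * b) (k * c) = k ^ 3 * ternaryCubic a b c := by
  simp only [ternaryCubic]
  ring

lemma derivation_ternaryCubic {A : Type*} [CommRing A] [Algebra R A] (D : Derivation R A A)
    (a b c : A) :
    D (ternaryCubic a b c) = ternaryCubicDerivA a b c * D a + ternaryCubicDerivB a b c * D b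
      + ternaryCubicDerivC a b c * D c := by
  have hD (n : ℕ) [n.AtLeastTwo] : D (OfNat.ofNat n) = 0 := D.map_natCast n
  simp only [ternaryCubic, ternaryCubicDerivA, ternaryCubicDerivB, ternaryCubicDerivC,
    map_add, map_sub, Derivation.leibniz, Derivation.leibniz_pow, hD, smul_eq_mul]
  ring

lemma isHomogeneous_ternaryCubic {σ : Type*} {a b c : MvPolynomial σ R}
    (ha : a.IsHomogeneous 1) (hb : b.IsHomogeneous 1) (hc : c.IsHomogeneous 1) :
    (ternaryCubic a b c).IsHomogeneous 3 := by
  have cube {x y z : MvPolynomial σ R} (n : ℕ) (hx : x.IsHomogeneous 1)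
      (hy : y.IsHomogeneous 1) (hz : z.IsHomogeneous 1) :
      ((n : MvPolynomial σ R) * x * y * z).IsHomogeneous 3 :=
    (((isHomogeneous_natCast n).mul hx).mul hy).mul hz
  simp only [ternaryCubic, pow_succ, pow_zero, one_mul, ← mul_assoc]
  exact (((((((cube 31 ha ha ha).add (cube 29 hb hb hb)).add (cube 31 hc hc hc)).sub
    (cube 11 hb hc hc)).add (cube 121 ha hc hc)).add (cube 3 ha hb hc)).add
    (cube 11 ha hb hb)).sub (cube 22 ha ha hc)

lemma eq_zero_of_ternaryCubicDeriv_eq_zero {K : Type*} [Field K] [CharZero K] {a b c : K}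
    (hA : ternaryCubicDerivA a b c = 0) (hB : ternaryCubicDerivB a b c = 0)
    (hC : ternaryCubicDerivC a b c = 0) : a = 0 ∧ b = 0 ∧ c = 0 := by
  simp only [ternaryCubicDerivA, ternaryCubicDerivB, ternaryCubicDerivC] at hA hB hC
  -- The partials form a regular sequence, so their ideal contains every quartic; the
  -- coefficients below solve the resulting linear system over `ℚ` in degree 4.
  have ha : a ^ 4 = 0 := by
    linear_combination
      (43709560178478787703 / 168339518119202346500310 * c ^ 2
        + 28526846192964910547 / 84169759059601173250155 * b * c
        - 2092665897384771159 / 1870439090213359405559 * b ^ 2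
        + 333744250802161485583 / 84169759059601173250155 * a * c
        + 1 / 93 * a ^ 2) * hA
      + (65144922247959171497 / 84169759059601173250155 * c ^ 2
        + 2442562614465350245 / 16833951811920234650031 * b * c
        + 264589941048649227 / 1870439090213359405559 * b ^ 2
        - 460391473509330124883 / 168339518119202346500310 * a * c
        - 304856216127140323 / 5430307036103301500010 * a * b) * hB
      + (-41458800990761629453 / 168339518119202346500310 * c ^ 2
        - 82559539714392602543 / 168339518119202346500310 * b * c
        + 99436377206190660557 / 168339518119202346500310 * b ^ 2
        - 266182917378480591137 / 56113172706400782166770 * a * c) * hC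
  have hb : b ^ 4 = 0 := by
    linear_combination
      (30903212828899274 / 905051172683883583335 * c ^ 2
        + 195759893750620441 / 1810102345367767166670 * b * c
        + 42109182229137298 / 60336744845592238889 * b ^ 2
        - 7207839222721082 / 2715153518051650750005 * a * c) * hA
      + (21641305077915699 / 60336744845592238889 * c ^ 2
        - 117399568953830581 / 5430307036103301500010 * b * c
        + 688201653345652053 / 60336744845592238889 * b ^ 2
        - 187231506467683094 / 905051172683883583335 * a * c
        - 1741606374046590403 / 603367448455922388890 * a * b) * hB
      + (-5434626272281349 / 2715153518051650750005 * c ^ 2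
        - 131088921284709539 / 905051172683883583335 * b * c
        + 38463602003304467 / 603367448455922388890 * b ^ 2
        - 10156500722925161 / 905051172683883583335 * a * c) * hC
  have hc : c ^ 4 = 0 := by
    linear_combination
      (34593618212427188387 / 5430307036103301500010 * c ^ 2
        + 552240785911890229 / 1810102345367767166670 * b * c
        + 5946955374152709 / 60336744845592238889 * b ^ 2
        - 2988722782813784147 / 5430307036103301500010 * a * c) * hA
      + (-33485830012546814989 / 23893350958854526600044 * c ^ 2
        + 32932319968655800 / 543030703610330150001 * b * c
        - 751913897881377 / 60336744845592238889 * b ^ 2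
        - 5552466847078008737 / 5430307036103301500010 * a * c
        - 431758074271339781 / 39822251598090877666740 * a * b) * hB
      + (24962680803618164897 / 10860614072206603000020 * c ^ 2
        - 279916299859631897 / 5430307036103301500010 * b * c
        + 16160247419614718329 / 39822251598090877666740 * b ^ 2
        - 92650406267227308557 / 39822251598090877666740 * a * c) * hC
  exact ⟨pow_eq_zero_iff four_ne_zero |>.mp ha, pow_eq_zero_iff four_ne_zero |>.mp hb,
    pow_eq_zero_iff four_ne_zero |>.mp hc⟩

end TernaryCubic

def TernaryCubicAnisotropic (R : Type*) [CommRing R] : Prop :=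
  ∀ a b c : R, ternaryCubic a b c = 0 → a = 0 ∧ b = 0 ∧ c = 0

lemma ternaryCubicAnisotropic_zmod {p : ℕ} (hp : p = 2 ∨ p = 3 ∨ p = 5) :
    TernaryCubicAnisotropic (ZMod p) := by
  unfold TernaryCubicAnisotropic
  rcases hp with rfl | rfl | rfl <;> decide

section CubicForm

variable {R : Type*} [CommRing R] (p : ℕ)

def blockCubic (y : Fin 9 → R) : R :=
  ternaryCubic (y 0) (y 1) (y 2) + p * ternaryCubic (y 3) (y 4) (y 5)
    + p ^ 2 * ternaryCubic (y 6) (y 7) (y 8)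

def cubicForm (x : Fin 11 → R) : R :=
  blockCubic p (Fin.take 9 (by norm_num) x) + x 9 ^ 3 + x 10 ^ 3

noncomputable def cubicPoly : MvPolynomial (Fin 11) ℤ :=
  cubicForm p X

lemma blockCubic_smul (k : R) (y : Fin 9 → R) :
    blockCubic p (k • y) = k ^ 3 * blockCubic p y := by
  simp only [blockCubic, Pi.smul_apply, smul_eq_mul, ternaryCubic_mul]
  ring

lemma map_cubicForm {S : Type*} [CommRing S] (f : R →+* S) (x : Fin 11 → R) :
    f (cubicForm p x) = cubicForm p (f ∘ x) := by
  simp only [cubicForm, blockCubic, map_add, map_mul, map_pow, map_natCast, map_ternaryCubic,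
    Fin.take_apply, Function.comp_apply]

lemma isHomogeneous_cubicPoly : (cubicPoly p).IsHomogeneous 3 := by
  have hX := isHomogeneous_X ℤ (σ := Fin 11)
  have hS (i j k : Fin 11) := isHomogeneous_ternaryCubic (hX i) (hX j) (hX k)
  exact ((((hS 0 1 2).add ((isHomogeneous_natCast p).mul (hS 3 4 5))).add
    (((isHomogeneous_natCast p).pow 2).mul (hS 6 7 8))).add (isHomogeneous_X_pow 9 3)).add
    (isHomogeneous_X_pow 10 3)

lemma map_cubicPoly (f : ℤ →+* R) : (cubicPoly p).map f = cubicForm p X := by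
  rw [cubicPoly, map_cubicForm]
  congr 1
  funext i
  simp

lemma eval_cubicForm_X (x : Fin 11 → R) : eval x (cubicForm p X) = cubicForm p x := by
  rw [map_cubicForm]
  congr 1
  funext i
  simp

lemma eval_pderiv_cubicForm_X (x : Fin 11 → R) :
    (fun i ↦ eval x (pderiv i (cubicForm p (X : Fin 11 → MvPolynomial (Fin 11) R)))) =
      ![ternaryCubicDerivA (x 0) (x 1) (x 2), ternaryCubicDerivB (x 0) (x 1) (x 2),
        ternaryCubicDerivC (x 0) (x 1) (x 2),
        p * ternaryCubicDerivA (x 3) (x 4) (x 5), p * ternaryCubicDerivB (x 3) (x 4) (x 5),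
        p * ternaryCubicDerivC (x 3) (x 4) (x 5),
        p ^ 2 * ternaryCubicDerivA (x 6) (x 7) (x 8), p ^ 2 * ternaryCubicDerivB (x 6) (x 7) (x 8),
        p ^ 2 * ternaryCubicDerivC (x 6) (x 7) (x 8),
        3 * x 9 ^ 2, 3 * x 10 ^ 2] := by
  funext i
  fin_cases i <;>
    simp [cubicForm, blockCubic, derivation_ternaryCubic, pderiv_X,
      map_ternaryCubicDerivA, map_ternaryCubicDerivB, map_ternaryCubicDerivC]

lemma eq_zero_of_eval_pderiv_cubicForm_eq_zero {K : Type*} [Field K] [CharZero K] (hp : p ≠ 0)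
    {x : Fin 11 → K}
    (hx : ∀ i, eval x (pderiv i (cubicForm p (X : Fin 11 → MvPolynomial (Fin 11) K))) = 0) :
    x = 0 := by
  have hgrad (i : Fin 11) := (congrFun (eval_pderiv_cubicForm_X p x) i).symm.trans (hx i)
  have hp' : (p : K) ≠ 0 := Nat.cast_ne_zero.mpr hp
  obtain ⟨h0, h1, h2⟩ := eq_zero_of_ternaryCubicDeriv_eq_zero (hgrad 0) (hgrad 1) (hgrad 2)
  obtain ⟨h3, h4, h5⟩ := eq_zero_of_ternaryCubicDeriv_eq_zero
    (by simpa [hp'] using hgrad 3) (by simpa [hp'] using hgrad 4) (by simpa [hp'] using hgrad 5)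
  obtain ⟨h6, h7, h8⟩ := eq_zero_of_ternaryCubicDeriv_eq_zero
    (by simpa [hp'] using hgrad 6) (by simpa [hp'] using hgrad 7) (by simpa [hp'] using hgrad 8)
  have h9 : x 9 = 0 := by simpa using hgrad 9
  have h10 : x 10 = 0 := by simpa using hgrad 10
  funext i
  fin_cases i <;> assumption

end CubicForm

lemma exists_mem_apply_eq_of_finrank_eq_two {K ι : Type*} [Field K] [Finite ι]
    {P : Submodule K (ι → K)} (hP : Module.finrank K P = 2) (i j : ι)
    (hP0 : ∀ v ∈ P, v i = 0 → v j = 0 → v = 0) (a b : K) : ∃ v ∈ P, v i = a ∧ v j = b := by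
  let L : P →ₗ[K] Fin 2 → K :=
    LinearMap.pi ![LinearMap.proj i, LinearMap.proj j] ∘ₗ P.subtype
  have hL (v : P) : L v = ![(v : ι → K) i, (v : ι → K) j] := by
    funext k
    fin_cases k <;> rfl
  have hinj : Function.Injective L := by
    rw [← LinearMap.ker_eq_bot, Submodule.eq_bot_iff]
    intro v hv
    rw [LinearMap.mem_ker, hL] at hv
    exact Subtype.ext (hP0 v v.2 (congrFun hv 0) (congrFun hv 1))
  obtain ⟨v, hv⟩ :=
    (LinearMap.injective_iff_surjective_of_finrank_eq_finrank (by simp [hP])).mp hinj ![a, b]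
  rw [hL] at hv
  exact ⟨v, v.2, congrFun hv 0, congrFun hv 1⟩

lemma exists_add_cube_add_cube_ne_zero_of_finrank_eq_two {K : Type*} [Field K]
    (h6 : (6 : K) ≠ 0) (G : (Fin 9 → K) → K) (hG3 : ∀ (k : K) y, G (k • y) = k ^ 3 * G y)
    (hG0 : ∀ y, G y = 0 → y = 0) {P : Submodule K (Fin 11 → K)}
    (hP : Module.finrank K P = 2) :
    ∃ v ∈ P, G (Fin.take 9 (by norm_num) v) + v 9 ^ 3 + v 10 ^ 3 ≠ 0 := by
  by_contra! hF
  have hP0 (v : Fin 11 → K) (hv : v ∈ P) (h9 : v 9 = 0) (h10 : v 10 = 0) : v = 0 := by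
    have htake := hG0 _ (by simpa [h9, h10] using hF v hv)
    funext i
    rcases lt_or_ge (i : ℕ) 9 with hi | hi
    · exact congrFun htake ⟨i, hi⟩
    · obtain rfl | rfl : i = 9 ∨ i = 10 := by omega
      exacts [h9, h10]
  obtain ⟨u, hu, hu9, hu10⟩ := exists_mem_apply_eq_of_finrank_eq_two hP 9 10 hP0 1 0
  obtain ⟨w, hw, hw9, hw10⟩ := exists_mem_apply_eq_of_finrank_eq_two hP 9 10 hP0 0 1
  set U := Fin.take 9 (by norm_num) u
  set W := Fin.take 9 (by norm_num) w
  have hGU : G U = -1 := by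
    have := hF u hu
    rw [hu9, hu10] at this
    linear_combination this
  have hUW : U = W := by
    have := hF _ (P.sub_mem hu hw)
    simp only [Pi.sub_apply, hu9, hu10, hw9, hw10] at this
    change G (U - W) + _ + _ = 0 at this
    exact sub_eq_zero.mp (hG0 (U - W) (by linear_combination this))
  have hGUW : G (U + W) = 8 * G U := by
    rw [← hUW, ← two_smul K U, hG3]
    norm_num
  have := hF _ (P.add_mem hu hw)
  simp only [Pi.add_apply, hu9, hu10, hw9, hw10] at this
  change G (U + W) + _ + _ = 0 at this
  apply h6
  linear_combination hGUW + 8 * hGU - this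

section Padic

variable {p : ℕ} [Fact p.Prime]

lemma norm_ternaryCubic_padicInt (hS : TernaryCubicAnisotropic (ZMod p)) {a b c : ℤ_[p]}
    (h : ‖a‖ = 1 ∨ ‖b‖ = 1 ∨ ‖c‖ = 1) : ‖ternaryCubic a b c‖ = 1 := by
  have toZMod_eq_zero {x : ℤ_[p]} : PadicInt.toZMod x = 0 ↔ ‖x‖ < 1 := by
    rw [← RingHom.mem_ker, PadicInt.ker_toZMod, IsLocalRing.mem_maximalIdeal,
      PadicInt.mem_nonunits]
  refine (PadicInt.norm_le_one _).eq_or_lt.resolve_right fun hlt ↦ ?_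
  obtain ⟨ha, hb, hc⟩ := hS _ _ _ <| by
    rw [← map_ternaryCubic PadicInt.toZMod]
    exact toZMod_eq_zero.mpr hlt
  rcases h with h | h | h
  · exact (toZMod_eq_zero.mp ha).ne h
  · exact (toZMod_eq_zero.mp hb).ne h
  · exact (toZMod_eq_zero.mp hc).ne h

lemma norm_ternaryCubic (hS : TernaryCubicAnisotropic (ZMod p)) (a b c : ℚ_[p]) :
    ‖ternaryCubic a b c‖ = max ‖a‖ (max ‖b‖ ‖c‖) ^ 3 := by
  obtain ⟨z, hz, hzmax⟩ := exists_norm_eq_max_max a b c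
  have hle {x : ℚ_[p]} (hx : x = a ∨ x = b ∨ x = c) : ‖x‖ ≤ ‖z‖ := by
    rw [hzmax]
    rcases hx with rfl | rfl | rfl <;> simp
  rcases eq_or_ne z 0 with rfl | hz0
  · have h0 {x : ℚ_[p]} (hx : x = a ∨ x = b ∨ x = c) : x = 0 :=
      norm_le_zero_iff.mp (by simpa using hle hx)
    simp [h0 (.inl rfl), h0 (.inr (.inl rfl)), h0 (.inr (.inr rfl)), ternaryCubic]
  have hint {x : ℚ_[p]} (hx : x = a ∨ x = b ∨ x = c) : ‖x / z‖ ≤ 1 := by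
    rw [norm_div]
    exact div_le_one_of_le₀ (hle hx) (norm_nonneg z)
  let a' : ℤ_[p] := ⟨a / z, hint (.inl rfl)⟩
  let b' : ℤ_[p] := ⟨b / z, hint (.inr (.inl rfl))⟩
  let c' : ℤ_[p] := ⟨c / z, hint (.inr (.inr rfl))⟩
  have hunit : ‖a'‖ = 1 ∨ ‖b'‖ = 1 ∨ ‖c'‖ = 1 := by
    simp only [a', b', c']
    rcases hz with rfl | rfl | rfl <;> simp [div_self hz0]
  have hcoe (x : ℤ_[p]) : PadicInt.Coe.ringHom x = x := rfl
  have hscale : ternaryCubic a b c = z ^ 3 * PadicInt.Coe.ringHom (ternaryCubic a' b' c') := by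
    rw [map_ternaryCubic, hcoe, hcoe, hcoe, ← ternaryCubic_mul]
    congr 1 <;> exact (mul_div_cancel₀ _ hz0).symm
  rw [hscale, norm_mul, norm_pow, hcoe, PadicInt.padic_norm_e_of_padicInt,
    norm_ternaryCubic_padicInt hS hunit, mul_one, hzmax]

lemma ternaryCubicAnisotropic_padic (hS : TernaryCubicAnisotropic (ZMod p)) :
    TernaryCubicAnisotropic ℚ_[p] := by
  intro a b c h
  have hmax : max ‖a‖ (max ‖b‖ ‖c‖) = 0 := by
    simpa [norm_ternaryCubic hS] using congrArg norm h
  refine ⟨?_, ?_, ?_⟩ <;> apply norm_le_zero_iff.mp <;> rw [← hmax] <;> simp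

lemma eq_zero_of_norm_p_pow_mul_cube_eq {i j : ℕ} (hi : i < 3) (hj : j < 3) (hij : i ≠ j)
    {z w : ℚ_[p]} (h : ‖(p : ℚ_[p]) ^ i * z ^ 3‖ = ‖(p : ℚ_[p]) ^ j * w ^ 3‖) : z = 0 := by
  have hp : p.Prime := Fact.out
  have hp0 : (p : ℚ_[p]) ≠ 0 := Nat.cast_ne_zero.mpr hp.ne_zero
  by_contra hz
  have hw : w ≠ 0 := by
    rintro rfl
    simp [hz, hp.ne_zero] at h
  rw [Padic.norm_eq_zpow_neg_valuation (by simp [hz, hp0]),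
    Padic.norm_eq_zpow_neg_valuation (by simp [hw, hp0]),
    Padic.valuation_mul (by simp [hp0]) (by simp [hz]),
    Padic.valuation_mul (by simp [hp0]) (by simp [hw]),
    Padic.valuation_pow, Padic.valuation_pow, Padic.valuation_pow, Padic.valuation_pow,
    Padic.valuation_p] at h
  have := zpow_right_injective₀ (by exact_mod_cast hp.pos) (by exact_mod_cast hp.ne_one) h
  omega

lemma blockCubic_eq_zero (hS : TernaryCubicAnisotropic (ZMod p)) {y : Fin 9 → ℚ_[p]}
    (h : blockCubic p y = 0) : y = 0 := by
  have hp0 : (p : ℚ_[p]) ≠ 0 := Nat.cast_ne_zero.mpr (Fact.out : p.Prime).ne_zero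
  have hnorm (i : ℕ) (a b c : ℚ_[p]) :
      ∃ z, ‖(p : ℚ_[p]) ^ i * ternaryCubic a b c‖ = ‖(p : ℚ_[p]) ^ i * z ^ 3‖ := by
    obtain ⟨z, -, hz⟩ := exists_norm_eq_max_max a b c
    exact ⟨z, by simp only [norm_mul, norm_pow, norm_ternaryCubic hS, hz]⟩
  have key {i j : ℕ} (hi : i < 3) (hj : j < 3) (hij : i ≠ j) {A B z w : ℚ_[p]}
      (hA : ‖A‖ = ‖(p : ℚ_[p]) ^ i * z ^ 3‖) (hB : ‖B‖ = ‖(p : ℚ_[p]) ^ j * w ^ 3‖)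
      (hAB : ‖A‖ = ‖B‖) : A = 0 := by
    have hz := eq_zero_of_norm_p_pow_mul_cube_eq hi hj hij (hA ▸ hB ▸ hAB)
    simpa [hz] using hA
  obtain ⟨z₀, hz₀⟩ := hnorm 0 (y 0) (y 1) (y 2)
  obtain ⟨z₁, hz₁⟩ := hnorm 1 (y 3) (y 4) (y 5)
  obtain ⟨z₂, hz₂⟩ := hnorm 2 (y 6) (y 7) (y 8)
  replace h : (p : ℚ_[p]) ^ 0 * ternaryCubic (y 0) (y 1) (y 2)
      + (p : ℚ_[p]) ^ 1 * ternaryCubic (y 3) (y 4) (y 5)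
      + (p : ℚ_[p]) ^ 2 * ternaryCubic (y 6) (y 7) (y 8) = 0 := by
    rwa [pow_zero, one_mul, pow_one]
  obtain ⟨h₀, h₁, h₂⟩ := IsUltrametricDist.eq_zero_of_add_add_eq_zero h
    (key (by norm_num) (by norm_num) (by norm_num) hz₀ hz₁)
    (key (by norm_num) (by norm_num) (by norm_num) hz₀ hz₂)
    (key (by norm_num) (by norm_num) (by norm_num) hz₁ hz₂)
  have hS' := ternaryCubicAnisotropic_padic hS
  obtain ⟨y0, y1, y2⟩ := hS' _ _ _ ((mul_eq_zero.mp h₀).resolve_left (pow_ne_zero 0 hp0))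
  obtain ⟨y3, y4, y5⟩ := hS' _ _ _ ((mul_eq_zero.mp h₁).resolve_left (pow_ne_zero 1 hp0))
  obtain ⟨y6, y7, y8⟩ := hS' _ _ _ ((mul_eq_zero.mp h₂).resolve_left (pow_ne_zero 2 hp0))
  funext i
  fin_cases i <;> assumption

end Padic

end SmoothCubicNoLine

open SmoothCubicNoLine

theorem exists_smooth_cubic_without_padic_line
    (p : ℕ) [Fact p.Prime] (hp : p = 2 ∨ p = 3 ∨ p = 5) :
    ∃ F : MvPolynomial (Fin 11) ℤ, F.IsHomogeneous 3 ∧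
      (∀ x : Fin 11 → ℂ,
        (∀ i, eval x (pderiv i (F.map (Int.castRingHom ℂ))) = 0) → x = 0) ∧
      ¬ ∃ x y : Fin 11 → ℚ_[p], LinearIndependent ℚ_[p] ![x, y] ∧
        ∀ s t : ℚ_[p], eval (s • x + t • y) (F.map (Int.castRingHom ℚ_[p])) = 0 := by
  refine ⟨cubicPoly p, isHomogeneous_cubicPoly p, fun x hx ↦ ?_, ?_⟩
  · rw [map_cubicPoly] at hx
    exact eq_zero_of_eval_pderiv_cubicForm_eq_zero p (Fact.out : p.Prime).ne_zero hx
  rintro ⟨x, y, hli, hline⟩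
  have hS := ternaryCubicAnisotropic_zmod hp
  obtain ⟨v, hv, hFv⟩ := exists_add_cube_add_cube_ne_zero_of_finrank_eq_two (by norm_num)
    (blockCubic p) (blockCubic_smul p) (fun _ ↦ blockCubic_eq_zero hS)
    (by simpa using finrank_span_eq_card hli)
  obtain ⟨c, rfl⟩ := (Submodule.mem_span_range_iff_exists_fun _).mp hv
  have hc := hline (c 0) (c 1)
  rw [map_cubicPoly, eval_cubicForm_X] at hc
  exact hFv (by simpa [Fin.sum_univ_two, cubicForm] using hc)
end

section
/- Let H₂ = x₁³ + x₂³ + x₃³ + x₁²x₂ + x₂²x₃ + x₃²x₁ + x₁x₂x₃ + x₁x₄² + x₁²x₄ + x₂x₅² + x₂²x₅ + x₄²x₅ ∈ ℤ[x₁,…,x₅]. Then: (i) the only common zero in ℂ^5 of the 5 partial derivatives of H₂ (with coefficients mapped into ℂ) is the zero vector; and (ii) there do not exist linearly independent vectors x, y ∈ 𝔽₂^5 such that H₂ (with coefficients reduced modulo 2) satisfies H₂(s•x + t•y) = 0 for all s, t ∈ 𝔽₂. -/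
open MvPolynomial

/-- The quintic-variable cubic form H₂ from Debarre–Laface–Roulleau,
with variables x₁,…,x₅ rendered as X 0,…,X 4. -/
noncomputable def H2 : MvPolynomial (Fin 5) ℤ :=
  X 0 ^ 3 + X 1 ^ 3 + X 2 ^ 3 + X 0 ^ 2 * X 1 + X 1 ^ 2 * X 2 + X 2 ^ 2 * X 0 +
    X 0 * X 1 * X 2 + X 0 * X 3 ^ 2 + X 0 ^ 2 * X 3 + X 1 * X 4 ^ 2 +
    X 1 ^ 2 * X 4 + X 3 ^ 2 * X 4

private def H2fun (v : Fin 5 → ZMod 2) : ZMod 2 :=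
  v 0 ^ 3 + v 1 ^ 3 + v 2 ^ 3 + v 0 ^ 2 * v 1 + v 1 ^ 2 * v 2 + v 2 ^ 2 * v 0 +
    v 0 * v 1 * v 2 + v 0 * v 3 ^ 2 + v 0 ^ 2 * v 3 + v 1 * v 4 ^ 2 +
    v 1 ^ 2 * v 4 + v 3 ^ 2 * v 4

private theorem H2key : ∀ x y : Fin 5 → ZMod 2, x ≠ 0 ∧ y ≠ 0 ∧ x ≠ y →
    ∃ s t : ZMod 2, H2fun (s • x + t • y) ≠ 0 := by decide

set_option maxHeartbeats 1600000 in
theorem H2_smooth_and_no_line_over_F2 :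
    (∀ x : Fin 5 → ℂ,
      (∀ i, eval x (pderiv i (H2.map (Int.castRingHom ℂ))) = 0) → x = 0) ∧
    ¬ ∃ x y : Fin 5 → ZMod 2, LinearIndependent (ZMod 2) ![x, y] ∧
      ∀ s t : ZMod 2,
        eval (s • x + t • y) (H2.map (Int.castRingHom (ZMod 2))) = 0 := by
  constructor
  · intro x hx
    have h0 : 3 * x 0 ^ 2 + 2 * x 0 * x 1 + x 2 ^ 2 + x 1 * x 2 + x 3 ^ 2 + 2 * x 0 * x 3 = 0 := by
      have h := hx 0
      simp only [H2, map_add, map_mul, map_pow, MvPolynomial.map_X, pderiv_mul, pderiv_pow,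
        pderiv_X, Pi.single_apply, smul_eq_mul, eval_add, eval_mul, eval_pow, eval_X,
        map_ofNat] at h
      simp (config := { decide := true }) only [] at h
      norm_num at h
      linear_combination h
    have h1 : 3 * x 1 ^ 2 + x 0 ^ 2 + 2 * x 1 * x 2 + x 0 * x 2 + x 4 ^ 2 + 2 * x 1 * x 4 = 0 := by
      have h := hx 1
      simp only [H2, map_add, map_mul, map_pow, MvPolynomial.map_X, pderiv_mul, pderiv_pow,
        pderiv_X, Pi.single_apply, smul_eq_mul, eval_add, eval_mul, eval_pow, eval_X,
        map_ofNat] at h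
      simp (config := { decide := true }) only [] at h
      norm_num at h
      linear_combination h
    have h2 : 3 * x 2 ^ 2 + x 1 ^ 2 + 2 * x 0 * x 2 + x 0 * x 1 = 0 := by
      have h := hx 2
      simp only [H2, map_add, map_mul, map_pow, MvPolynomial.map_X, pderiv_mul, pderiv_pow,
        pderiv_X, Pi.single_apply, smul_eq_mul, eval_add, eval_mul, eval_pow, eval_X,
        map_ofNat] at h
      simp (config := { decide := true }) only [] at h
      norm_num at h
      linear_combination h
    have h3 : 2 * x 0 * x 3 + x 0 ^ 2 + 2 * x 3 * x 4 = 0 := by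
      have h := hx 3
      simp only [H2, map_add, map_mul, map_pow, MvPolynomial.map_X, pderiv_mul, pderiv_pow,
        pderiv_X, Pi.single_apply, smul_eq_mul, eval_add, eval_mul, eval_pow, eval_X,
        map_ofNat] at h
      simp (config := { decide := true }) only [] at h
      norm_num at h
      linear_combination h
    have h4 : 2 * x 1 * x 4 + x 1 ^ 2 + x 3 ^ 2 = 0 := by
      have h := hx 4
      simp only [H2, map_add, map_mul, map_pow, MvPolynomial.map_X, pderiv_mul, pderiv_pow,
        pderiv_X, Pi.single_apply, smul_eq_mul, eval_add, eval_mul, eval_pow, eval_X,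
        map_ofNat] at h
      simp (config := { decide := true }) only [] at h
      norm_num at h
      linear_combination h
    have g5 : x 0 * x 2 + (2 : ℂ) * x 1 * x 2 + (-2 : ℂ) * x 0 * x 3 + (-3 : ℂ) * x 3 ^ 2 + (-4 : ℂ) * x 1 * x 4 + (-2 : ℂ) * x 3 * x 4 + x 4 ^ 2 = 0 := by
      linear_combination (-1 : ℂ) * h3 +
        (1 : ℂ) * h1 +
        (-3 : ℂ) * h4
    have g6 : (9 : ℂ) * x 1 * x 2 + (-5 : ℂ) * x 2 ^ 2 + (-12 : ℂ) * x 0 * x 3 + (-9 : ℂ) * x 3 ^ 2 + (-12 : ℂ) * x 1 * x 4 + (-14 : ℂ) * x 3 * x 4 + (4 : ℂ) * x 4 ^ 2 = 0 := by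
      linear_combination (-3 : ℂ) * h3 +
        (1 : ℂ) * h0 +
        (-2 : ℂ) * h2 +
        (2 : ℂ) * h4 +
        (4 : ℂ) * g5
    have g7 : (75 : ℂ) * x 2 ^ 3 + (-452 : ℂ) * x 2 ^ 2 * x 3 + (312 : ℂ) * x 0 * x 3 ^ 2 + (243 : ℂ) * x 1 * x 3 ^ 2 + (378 : ℂ) * x 2 * x 3 ^ 2 + (-144 : ℂ) * x 3 ^ 3 + (370 : ℂ) * x 2 ^ 2 * x 4 + (888 : ℂ) * x 0 * x 3 * x 4 + (402 : ℂ) * x 1 * x 3 * x 4 + (210 : ℂ) * x 2 * x 3 * x 4 + (862 : ℂ) * x 3 ^ 2 * x 4 + (132 : ℂ) * x 1 * x 4 ^ 2 + (-60 : ℂ) * x 2 * x 4 ^ 2 + (1088 : ℂ) * x 3 * x 4 ^ 2 + (-296 : ℂ) * x 4 ^ 3 = 0 := by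
      linear_combination (-27 : ℂ) * x 1 * g6 +
        (243 : ℂ) * x 2 * h4 +
        (-15 : ℂ) * x 2 * g6 +
        (-324 : ℂ) * x 3 * h2 +
        (324 : ℂ) * x 3 * h4 +
        (468 : ℂ) * x 3 * g5 +
        (-104 : ℂ) * x 3 * g6 +
        (-324 : ℂ) * x 4 * h4 +
        (-74 : ℂ) * x 4 * g6
    have g8 : (5792 : ℂ) * x 2 ^ 2 * x 3 + (-2427 : ℂ) * x 0 * x 3 ^ 2 + (-1053 : ℂ) * x 1 * x 3 ^ 2 + (1512 : ℂ) * x 2 * x 3 ^ 2 + (-2826 : ℂ) * x 3 ^ 3 + (-2120 : ℂ) * x 2 ^ 2 * x 4 + (6702 : ℂ) * x 0 * x 3 * x 4 + (-6342 : ℂ) * x 1 * x 3 * x 4 + (-6660 : ℂ) * x 2 * x 3 * x 4 + (-5152 : ℂ) * x 3 ^ 2 * x 4 + (-900 : ℂ) * x 0 * x 4 ^ 2 + (1428 : ℂ) * x 1 * x 4 ^ 2 + (-315 : ℂ) * x 2 * x 4 ^ 2 + (6102 : ℂ) * x 3 * x 4 ^ 2 + (616 : ℂ) * x 4 ^ 3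 = 0 := by
      linear_combination (-225 : ℂ) * x 0 * g6 +
        (2025 : ℂ) * x 2 * h2 +
        (-2025 : ℂ) * x 2 * h4 +
        (-5175 : ℂ) * x 2 * g5 +
        (1150 : ℂ) * x 2 * g6 +
        ((-13 : ℂ)/3) * g7 +
        (-900 : ℂ) * x 3 * h0 +
        (1800 : ℂ) * x 3 * h2 +
        (-1800 : ℂ) * x 3 * h4 +
        (-150 : ℂ) * x 3 * g5 +
        ((400 : ℂ)/3) * x 3 * g6 +
        (-2700 : ℂ) * x 4 * h2 +
        (2700 : ℂ) * x 4 * h4 +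
        (5400 : ℂ) * x 4 * g5 +
        ((-4550 : ℂ)/3) * x 4 * g6
    have g9 : (58725 : ℂ) * x 0 * x 3 ^ 2 + (34371 : ℂ) * x 1 * x 3 ^ 2 + (-55368 : ℂ) * x 2 * x 3 ^ 2 + (10710 : ℂ) * x 3 ^ 3 + (11576 : ℂ) * x 2 ^ 2 * x 4 + (-216978 : ℂ) * x 0 * x 3 * x 4 + (-5958 : ℂ) * x 1 * x 3 * x 4 + (23580 : ℂ) * x 2 * x 3 * x 4 + (45792 : ℂ) * x 3 ^ 2 * x 4 + (18684 : ℂ) * x 0 * x 4 ^ 2 + (-137724 : ℂ) * x 1 * x 4 ^ 2 + (16965 : ℂ) * x 2 * x 4 ^ 2 + (-216106 : ℂ) * x 3 * x 4 ^ 2 + (13160 : ℂ) * x 4 ^ 3 = 0 := by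
      linear_combination (2896 : ℂ) * x 0 * g6 +
        (-26064 : ℂ) * x 1 * g5 +
        (52128 : ℂ) * x 2 * h4 +
        (14480 : ℂ) * x 2 * g5 +
        ((-28960 : ℂ)/9) * x 2 * g6 +
        ((-5792 : ℂ)/27) * g7 +
        (11584 : ℂ) * x 3 * h0 +
        (-75296 : ℂ) * x 3 * h2 +
        (75296 : ℂ) * x 3 * h4 +
        ((422816 : ℂ)/3) * x 3 * g5 +
        ((-880384 : ℂ)/27) * x 3 * g6 +
        ((-71 : ℂ)/9) * g8 +
        (34752 : ℂ) * x 4 * h2 +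
        (-139008 : ℂ) * x 4 * h4 +
        (-69504 : ℂ) * x 4 * g5 +
        ((162176 : ℂ)/27) * x 4 * g6
    have g10 : (92151 : ℂ) * x 1 * x 3 ^ 2 + (652392 : ℂ) * x 2 * x 3 ^ 2 + (-455940 : ℂ) * x 3 ^ 3 + (340156 : ℂ) * x 2 ^ 2 * x 4 + (1838832 : ℂ) * x 0 * x 3 * x 4 + (-91998 : ℂ) * x 1 * x 3 * x 4 + (-349470 : ℂ) * x 2 * x 3 * x 4 + (741852 : ℂ) * x 3 ^ 2 * x 4 + (-85671 : ℂ) * x 0 * x 4 ^ 2 + (743406 : ℂ) * x 1 * x 4 ^ 2 + (-126585 : ℂ) * x 2 * x 4 ^ 2 + (1905364 : ℂ) * x 3 * x 4 ^ 2 + (-351440 : ℂ) * x 4 ^ 3 = 0 := by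
      linear_combination (58725 : ℂ) * x 0 * g5 +
        (-58725 : ℂ) * x 2 * h1 +
        (-117450 : ℂ) * x 2 * h2 +
        (293625 : ℂ) * x 2 * h4 +
        (293625 : ℂ) * x 2 * g5 +
        (-52200 : ℂ) * x 2 * g6 +
        (1218 : ℂ) * g7 +
        (39150 : ℂ) * x 3 * h0 +
        (-78300 : ℂ) * x 3 * h2 +
        (78300 : ℂ) * x 3 * h4 +
        (117450 : ℂ) * x 3 * g5 +
        (-30450 : ℂ) * x 3 * g6 +
        ((148509 : ℂ)/1448) * g8 +
        ((-4037 : ℂ)/1448) * g9 +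
        (234900 : ℂ) * x 4 * h2 +
        (-234900 : ℂ) * x 4 * h4 +
        (-469800 : ℂ) * x 4 * g5 +
        (113100 : ℂ) * x 4 * g6
    have g11 : (2202885 : ℂ) * x 2 * x 3 ^ 2 + (-1628838 : ℂ) * x 3 ^ 3 + (698084 : ℂ) * x 2 ^ 2 * x 4 + (6935574 : ℂ) * x 0 * x 3 * x 4 + (-235026 : ℂ) * x 1 * x 3 * x 4 + (-1302282 : ℂ) * x 2 * x 3 * x 4 + (1983798 : ℂ) * x 3 ^ 2 * x 4 + (-375759 : ℂ) * x 0 * x 4 ^ 2 + (2809308 : ℂ) * x 1 * x 4 ^ 2 + (-444492 : ℂ) * x 2 * x 4 ^ 2 + (7360694 : ℂ) * x 3 * x 4 ^ 2 + (-1023796 : ℂ) * x 4 ^ 3 = 0 := by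
      linear_combination (92151 : ℂ) * x 0 * h4 +
        (-92151 : ℂ) * x 1 * h2 +
        (92151 : ℂ) * x 1 * h4 +
        (184302 : ℂ) * x 2 * h2 +
        (-184302 : ℂ) * x 2 * h4 +
        (-368604 : ℂ) * x 2 * g5 +
        (112629 : ℂ) * x 2 * g6 +
        ((3413 : ℂ)/25) * g7 +
        (614340 : ℂ) * x 3 * g5 +
        (-136520 : ℂ) * x 3 * g6 +
        ((-3880581 : ℂ)/36200) * g8 +
        ((-43143733 : ℂ)/3149400) * g9 +
        ((5491 : ℂ)/2175) * g10 +
        (-184302 : ℂ) * x 4 * h2 +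
        (368604 : ℂ) * x 4 * g5 +
        (-54608 : ℂ) * x 4 * g6
    have g12 : (3348864 : ℂ) * x 3 ^ 3 + (-475042 : ℂ) * x 2 ^ 2 * x 4 + (-1435542 : ℂ) * x 0 * x 3 * x 4 + (955818 : ℂ) * x 1 * x 3 * x 4 + (1509606 : ℂ) * x 2 * x 3 * x 4 + (-3746754 : ℂ) * x 3 ^ 2 * x 4 + (-213633 : ℂ) * x 0 * x 4 ^ 2 + (-58929 : ℂ) * x 1 * x 4 ^ 2 + (-83079 : ℂ) * x 2 * x 4 ^ 2 + (654728 : ℂ) * x 3 * x 4 ^ 2 + (145868 : ℂ) * x 4 ^ 3 = 0 := by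
      linear_combination (734295 : ℂ) * x 0 * h2 +
        (-734295 : ℂ) * x 1 * h1 +
        (-734295 : ℂ) * x 1 * h2 +
        (2937180 : ℂ) * x 1 * h4 +
        (-489530 : ℂ) * x 2 * h0 +
        (3181945 : ℂ) * x 2 * h2 +
        (-1713355 : ℂ) * x 2 * h4 +
        (-8566775 : ℂ) * x 2 * g5 +
        (2202885 : ℂ) * x 2 * g6 +
        ((391624 : ℂ)/15) * g7 +
        (10280130 : ℂ) * x 3 * g5 +
        ((-6853420 : ℂ)/3) * x 3 * g6 +
        ((1419637 : ℂ)/21720) * g8 +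
        ((-95507303 : ℂ)/377928) * g9 +
        ((-5091112 : ℂ)/890793) * g10 +
        ((-333301 : ℂ)/30717) * g11 +
        (-4405770 : ℂ) * x 4 * h4 +
        (-489530 : ℂ) * x 4 * g6
    have g13 : (1078234474 : ℂ) * x 2 ^ 2 * x 4 ^ 2 + (-7033208466 : ℂ) * x 0 * x 3 * x 4 ^ 2 + (390062574 : ℂ) * x 1 * x 3 * x 4 ^ 2 + (-1618503102 : ℂ) * x 2 * x 3 * x 4 ^ 2 + (4932105354 : ℂ) * x 3 ^ 2 * x 4 ^ 2 + (495611397 : ℂ) * x 0 * x 4 ^ 3 + (542908149 : ℂ) * x 1 * x 4 ^ 3 + (119089251 : ℂ) * x 2 * x 4 ^ 3 + (-12736255208 : ℂ) * x 3 * x 4 ^ 3 + (423152932 : ℂ) * x 4 ^ 4 = 0 := by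
      linear_combination (-608 : ℂ) * x 2 * g12 +
        ((226234368 : ℂ)/244765) * x 3 * g11 +
        ((110037056 : ℂ)/244765) * x 3 * g12 +
        ((-288825536 : ℂ)/75) * x 4 * g7 +
        (-872809536 : ℂ) * x 3 * x 4 * g5 +
        ((775585472 : ℂ)/3) * x 3 * x 4 * g6 +
        ((29808568 : ℂ)/4525) * x 4 * g8 +
        ((-245872312 : ℂ)/4525) * x 4 * g9 +
        ((7216282688 : ℂ)/255975) * x 4 * g10 +
        ((-24696005699008 : ℂ)/2506148835) * x 4 * g11 +
        ((-262545809 : ℂ)/244765) * x 4 * g12 +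
        (-129888864 : ℂ) * x 4 ^ 2 * g5 +
        ((74649632 : ℂ)/3) * x 4 ^ 2 * g6
    have g14 : (53490539330678218 : ℂ) * x 0 * x 3 * x 4 ^ 2 + (-932601451374300 : ℂ) * x 1 * x 3 * x 4 ^ 2 + (17017937484742332 : ℂ) * x 2 * x 3 * x 4 ^ 2 + (-37380518989746846 : ℂ) * x 3 ^ 2 * x 4 ^ 2 + (-4590164267156047 : ℂ) * x 0 * x 4 ^ 3 + (-2551553436412943 : ℂ) * x 1 * x 4 ^ 3 + (-2018705345747927 : ℂ) * x 2 * x 4 ^ 3 + (104430269758977342 : ℂ) * x 3 * x 4 ^ 3 + (-8041019341242981 : ℂ) * x 4 ^ 4 = 0 := by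
      linear_combination ((18329986058 : ℂ)/9) * x 1 * g12 +
        ((-757834943581952 : ℂ)/10239) * x 3 * g10 +
        ((54933939390368536576 : ℂ)/2506148835) * x 3 * g11 +
        ((1287571540658152 : ℂ)/2202885) * x 3 * g12 +
        ((8707513236964436 : ℂ)/81) * x 2 * x 4 * g6 +
        ((8707513236964436 : ℂ)/1215) * x 4 * g7 +
        ((8771154948557812 : ℂ)/3) * x 3 * x 4 * h2 +
        ((-14611198486552960 : ℂ)/3) * x 3 * x 4 * h4 +
        ((-123050736126182872 : ℂ)/27) * x 3 * x 4 * g5 +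
        ((163088301453146300 : ℂ)/243) * x 3 * x 4 * g6 +
        ((22433327571950851 : ℂ)/16290) * x 4 * g8 +
        ((-5444813102647001291 : ℂ)/21258450) * x 4 * g9 +
        ((30290316771473734864 : ℂ)/200428425) * x 4 * g10 +
        ((-1175458255485557072324 : ℂ)/22555339515) * x 4 * g11 +
        ((112790643418657801 : ℂ)/148817120) * x 4 * g12 +
        (435098879058746 : ℂ) * x 4 ^ 2 * h2 +
        ((-945240721038944 : ℂ)/3) * x 4 ^ 2 * h4 +
        (-870197758117492 : ℂ) * x 4 ^ 2 * g5 +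
        ((86389242621340058 : ℂ)/243) * x 4 ^ 2 * g6 +
        ((-55630618463 : ℂ)/5472) * g13
    have g15 : (423596862375344067782 : ℂ) * x 1 * x 3 * x 4 ^ 2 + (-213766570576589902746 : ℂ) * x 2 * x 3 * x 4 ^ 2 + (90071377940595469392 : ℂ) * x 3 ^ 2 * x 4 ^ 2 + (57171328230119168108 : ℂ) * x 0 * x 4 ^ 3 + (-330329557338582706856 : ℂ) * x 1 * x 4 ^ 3 + (42260018096560979120 : ℂ) * x 2 * x 4 ^ 3 + (-131431694405071106222 : ℂ) * x 3 * x 4 ^ 3 + (25662844779784200703 : ℂ) * x 4 ^ 4 = 0 := by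
      linear_combination ((53490539330678218 : ℂ)/289) * x 0 * g12 +
        ((-130088991652209426176 : ℂ)/12325) * x 3 * g9 +
        ((165603286373262599522048 : ℂ)/42065225) * x 3 * g10 +
        ((-4065020811148240149147648 : ℂ)/2840302013) * x 3 * g11 +
        ((-105162400324113376588 : ℂ)/832201) * x 3 * g12 +
        ((25410252784724042035156 : ℂ)/289) * x 2 * x 4 * g5 +
        ((-50820505569448084070312 : ℂ)/2601) * x 2 * x 4 * g6 +
        ((-50820505569448084070312 : ℂ)/39015) * x 4 * g7 +
        ((25595971937280156808052 : ℂ)/289) * x 3 * x 4 * h0 +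
        ((-102319164196530506588428 : ℂ)/289) * x 3 * x 4 * h2 +
        ((102319164196530506588428 : ℂ)/289) * x 3 * x 4 * h4 +
        ((320845562259251489573932 : ℂ)/867) * x 3 * x 4 * g5 +
        ((-718479040330343449572020 : ℂ)/7803) * x 3 * x 4 * g6 +
        ((-1149231747478687800366097 : ℂ)/18831240) * x 4 * g8 +
        ((29072137572765513021359009 : ℂ)/2730529800) * x 4 * g9 +
        ((-2093445223263448780172884 : ℂ)/6435979425) * x 4 * g10 +
        ((27577795724104773486135166 : ℂ)/42604530195) * x 4 * g11 +
        ((11522386084915562485006201 : ℂ)/193536664560) * x 4 * g12 +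
        ((3809114796276926581998 : ℂ)/289) * x 4 ^ 2 * h0 +
        ((-4466085600336316455474 : ℂ)/289) * x 4 ^ 2 * h2 +
        ((4466085600336316455474 : ℂ)/289) * x 4 ^ 2 * h4 +
        ((13376111717726048584170 : ℂ)/289) * x 4 ^ 2 * g5 +
        ((9956996443709096889610 : ℂ)/7803) * x 4 ^ 2 * g6 +
        ((-17416696526027663999006035 : ℂ)/426282155764848) * g13 +
        ((-836611704581723 : ℂ)/155804881493) * g14
    have g16 : (3992463402039332477033152 : ℂ) * x 2 * x 3 * x 4 ^ 2 + (15355207931394599076233892 : ℂ) * x 3 ^ 2 * x 4 ^ 2 + (8763997041374177705528555 : ℂ) * x 0 * x 4 ^ 3 + (-30958009949194067147493337 : ℂ) * x 1 * x 4 ^ 3 + (12373496651151002885807529 : ℂ) * x 2 * x 4 ^ 3 + (42665468905581691593806120 : ℂ) * x 3 * x 4 ^ 3 + (-4066661168125152662614234 : ℂ) * x 4 ^ 4 = 0 := by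
      linear_combination ((-4378297169511556284594752 : ℂ)/244765) * x 2 * g11 +
        ((1231396078925125205042274 : ℂ)/181) * x 3 * g8 +
        ((110688825316714032319911074 : ℂ)/393675) * x 3 * g9 +
        ((-201401669797531589091358592 : ℂ)/7423275) * x 3 * g10 +
        ((-571310133771575721233794019197792 : ℂ)/204472506532925) * x 3 * g11 +
        ((-113742200879653473558082032002 : ℂ)/539189147025) * x 3 * g12 +
        ((3056419201281305257375042855168 : ℂ)/18357375) * x 4 * g7 +
        ((30366004013137942466971962507648 : ℂ)/244765) * x 3 * x 4 * g5 +
        ((-20587007232279169320429030399616 : ℂ)/734295) * x 3 * x 4 * g6 +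
        ((-908329652473684713923703460474973 : ℂ)/79744437000) * x 4 * g8 +
        ((-29603939370688882563060296824757743 : ℂ)/20813298057000) * x 4 * g9 +
        ((20392657913722567650152454112561568 : ℂ)/49057863445125) * x 4 * g10 +
        ((-837785551933458787924677882900531794 : ℂ)/5520757676388975) * x 4 * g11 +
        ((1741589503503931749996036752658936187 : ℂ)/50157531212853600) * x 4 * g12 +
        ((-1645184566118492877943039416768 : ℂ)/244765) * x 4 ^ 2 * g5 +
        ((5196784798974385639549464128384 : ℂ)/734295) * x 4 ^ 2 * g6 +
        ((-6231507005198656303730377977404034649 : ℂ)/110476537259064374880) * g13 +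
        ((-15257735359751072241859137092236744730 : ℂ)/2206081890374022872154640449) * g14 +
        ((30754123435531299309337 : ℂ)/240707426988051981) * g15
    have g17 : (3264601511563500 : ℂ) * x 3 ^ 2 * x 4 ^ 2 + (2012693912086145 : ℂ) * x 0 * x 4 ^ 3 + (-9073294793915467 : ℂ) * x 1 * x 4 ^ 3 + (3259162636397819 : ℂ) * x 2 * x 4 ^ 3 + (10240379007408632 : ℂ) * x 3 * x 4 ^ 3 + (-958329890360206 : ℂ) * x 4 ^ 4 = 0 := by
      linear_combination ((-31939707216314659816265216 : ℂ)/7455439299472677) * x 2 * g10 +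
        ((31939707216314659816265216 : ℂ)/728141351643) * x 3 ^ 2 * g6 +
        ((234087112304220651626527026352 : ℂ)/449811504401518179) * x 3 * g8 +
        ((17886658244140975156517967215824 : ℂ)/587004013243981223595) * x 3 * g9 +
        ((-59977084884354427125498780439552 : ℂ)/11068755233158607271435) * x 3 * g10 +
        ((7017349513739127594970131385371904 : ℂ)/6228146838262221859293765) * x 3 * g11 +
        ((1431673823182051183104514889563492 : ℂ)/5304782554593694387625835) * x 3 * g12 +
        ((10864483047872729424461510813696 : ℂ)/559157947460450775) * x 4 * g7 +
        ((19577251899996772846420866555904 : ℂ)/2485146433157559) * x 3 * x 4 * g5 +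
        ((-40133966861489051050767322225664 : ℂ)/22366317898418031) * x 3 * x 4 * g6 +
        ((16840053324685250096749709221340981 : ℂ)/392280612988564003905900) * x 4 * g8 +
        ((-10590965367969550626683295328621057097 : ℂ)/102385239990015205019439900) * x 4 * g9 +
        ((12548485983060865513478864360838244544 : ℂ)/482653071941881070070923175) * x 4 * g10 +
        ((-616576950160083919030930191214379496572 : ℂ)/54315668576484836834900924565) * x 4 * g11 +
        ((705114117151910539412509648114453132013 : ℂ)/246736046179261913357252837520) * x 4 * g12 +
        ((-101344690997366415597009530368 : ℂ)/276127381461951) * x 4 ^ 2 * g5 +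
        ((9738927765569800812536324601856 : ℂ)/22366317898418031) * x 4 ^ 2 * g6 +
        ((-1929169642018166353482449417119937883551 : ℂ)/543458645984793942877844232934416) * g13 +
        ((-2534588350830211255233736324625532499999067324 : ℂ)/5312481008341876904132970633359427287747367279) * g14 +
        ((1184668237890796873204602595453905386085054437327890 : ℂ)/122768794228300722446008438920504494938859826076951549641) * g15 +
        ((91605404844958776640268959781 : ℂ)/510033262224163152031427441248316274861) * g16
    have g18 : (33499203967118693451234231431395 : ℂ) * x 0 * x 4 ^ 4 + (-186318050089737696502838422562417 : ℂ) * x 1 * x 4 ^ 4 + (67049846144611746020544379998469 : ℂ) * x 2 * x 4 ^ 4 + (247935405744012636245678907666832 : ℂ) * x 3 * x 4 ^ 4 + (-23404298449882233588727236998306 : ℂ) * x 4 ^ 5 = 0 := by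
      linear_combination (-3264601511563500 : ℂ) * x 3 * g17 +
        ((74011271036824229334823140625 : ℂ)/23256) * x 4 ^ 2 * g12 +
        ((17579231107937527775836527184390625 : ℂ)/12537710463672) * x 4 * g13 +
        ((96234805983219481932557326182030185196250 : ℂ)/245120210041558096906071161) * x 4 * g14 +
        ((-439201619376507881524713411658084814264301857750 : ℂ)/5664606156810057524195434492255743119) * x 4 * g15 +
        ((-401109544416838703994699770966376061921893405408375 : ℂ)/105699685640765818227383486466161835159319304) * x 4 * g16 +
        ((18094947644651039135205021182796875976919 : ℂ)/499057925254916559629144) * x 4 * g17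
    have g19 : (24952721219870246124267716212697896436555860772 : ℂ) * x 1 * x 4 ^ 4 + (-1817044212097884334350909355042528648738601909 : ℂ) * x 2 * x 4 ^ 4 + (554919798027427201257438185020754975691813673 : ℂ) * x 3 * x 4 ^ 4 + (-823116332348015849072256183295933479328557014 : ℂ) * x 4 ^ 5 = 0 := by
      linear_combination ((-33499203967118693451234231431395 : ℂ)/54) * x 2 * g17 +
        ((9113462658935806866059705042135524937453006875 : ℂ)/17966085309176996146649184) * x 3 * g16 +
        ((-11661592841913301129676031343617127567200195487133883510830617182000625 : ℂ)/5013831359402642668637681077248) * x 4 ^ 2 * g12 +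
        ((67423643884351831416440846335324335033897522275 : ℂ)/54) * x 4 ^ 3 * g5 +
        ((-438795440723874063095094693078202908439834931015 : ℂ)/486) * x 4 ^ 3 * g6 +
        ((-9018401885820866141770377070735392174205364027846086205651980366627786302145 : ℂ)/2703042909265106686014253176453125323776) * x 4 * g13 +
        ((-19555233143569177594579198420466702597430836479038274088530553791940518016651282125 : ℂ)/26423103627660099221624147039842570320483698439495744) * x 4 * g14 +
        ((26723045053641882199759484602055533651321889016430778507766339675901352182937988298697515 : ℂ)/610624784736832429505598787171867528565134566569097430289789376) * x 4 * g15 +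
        ((114938378406453036127891024072573831640439846907075853137432176635355367986697393396940829335 : ℂ)/22788114832502273465097654152960505815772068970576486643049639124575232) * x 4 * g16 +
        ((-2057141660121606238465897340747126196393798811997857929073886204507918992310967964622741693549 : ℂ)/52740180104021453471415623283757924602917001032356565865907200) * x 4 * g17 +
        ((279751664060954567211272711658832631483664895641664913 : ℂ)/317038428417394664100072113524074806400) * g18
    have g20 : (333348134418712788140442115738326223051100197 : ℂ) * x 2 * x 4 ^ 4 + (1364882067976846703923513873831127302532114707 : ℂ) * x 3 * x 4 ^ 4 + (-149795680679291486165937930005271019861715446 : ℂ) * x 4 ^ 5 = 0 := by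
      linear_combination ((891168614995365933009561293310639158448423599 : ℂ)/2448451133672625) * x 2 * g17 +
        ((-3564674459981463732038245173242556633793694396 : ℂ)/6608655) * x 4 ^ 2 * g11 +
        ((-4743690537620332861409894764292532240420958817477 : ℂ)/18081280080) * x 4 ^ 2 * g12 +
        ((-9695403492126565631996322438574477927838867859507939129383 : ℂ)/13234870992825) * x 4 ^ 3 * g5 +
        ((11673134847025140181407841268676788889655575806350260491777443 : ℂ)/22036060203053625) * x 4 ^ 3 * g6 +
        ((17226171938362388204878556216878395342857601531764640080377606991 : ℂ)/10834578140624767496824722000) * x 4 * g13 +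
        ((1539514799856675516576174702496526476492381611667776518901207693029198 : ℂ)/4236457808204646216947271131721328430595) * x 4 * g14 +
        ((-15448664813833805226124040018701286671590801870063638955461734635555168279929 : ℂ)/41608534099351550181407554314608424272478069127252125) * x 4 * g15 +
        ((-1001366589118643211080392021321702526290076215888264355548586382531779378827746077 : ℂ)/517601030271946299361258515097515858082993379523217157706000) * x 4 * g16 +
        ((2589063507418365118842735012728464908553090010962320910392426324110900405310916769503 : ℂ)/221615468214700782408289852424084519683956476162250000) * x 4 * g17 +
        ((-21300884698229994880038043521913445443305617300067142827307623615731433181 : ℂ)/120615502588943306575350060266734853387151223126512800671875) * g18 +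
        ((6600358782356663299798192578853585437065275219 : ℂ)/9113462658935806866059705042135524937453006875) * g19
    have g21 : (1363358167148133159985 : ℂ) * x 3 * x 4 ^ 4 + (79316719130396108104 : ℂ) * x 4 ^ 5 = 0 := by
      linear_combination ((2333436940930989516983094810168283561357701379 : ℂ)/1414803887743095766167790655135485270887) * x 1 * g17 +
        ((-1269623627416902973347130678591935100702440153365874732677750 : ℂ)/99884414620735645842240590541219363940218821083878793210439) * x 3 * g15 +
        ((-18093539250394764832770224606874046947149471076617378731220304632492174710540100 : ℂ)/14668925246786616212745610886292934568896595845557355692091861101) * x 4 ^ 2 * g11 +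
        ((-9266905261609514447650045097827745753928454374468994886068200955164478384344695725 : ℂ)/35909529004133636488801255449645103824658866629924406734240875975248) * x 4 ^ 2 * g12 +
        ((-4696494325248720138244195623285008721856270807220463833293955 : ℂ)/1414803887743095766167790655135485270887) * x 4 ^ 3 * h2 +
        ((8622818524442633470342588337851394089816975595605178062874316 : ℂ)/471601295914365255389263551711828423629) * x 4 ^ 3 * h4 +
        ((9392988650497440276488391246570017443712541614440927666587910 : ℂ)/1414803887743095766167790655135485270887) * x 4 ^ 3 * g5 +
        ((-26391027793267586191639997860742715337141453392260089782068221 : ℂ)/12733234989687861895510115896219367437983) * x 4 ^ 3 * g6 +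
        ((4537576021121426370750966336962380764394754600158077165226776375847165027720214465 : ℂ)/14647039419276605967935165536817900922750711487493557824873695440475696) * x 4 * g13 +
        ((-230379637987969702623654798429784964716630047307685743210561625141819955861628674213198982 : ℂ)/24483688691712798045550363505736860764265305866727596874895642626314908711605382049679) * x 4 * g14 +
        ((-28398840357118885456127389910102067077153170718784227709496478645963511975628972857015207235046152 : ℂ)/565805870029987666299975230198038483454352265889448148628742736271274659480185318255581693219241) * x 4 * g15 +
        ((-85261774671656743114314726334768541883090689598604827525587847084599153699354140734319475519301024259 : ℂ)/31673253677471012689245877273130994884446564001233409809545480643196216064122216261105641050636201043368) * x 4 * g16 +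
        ((66709608701797018014716114172809490319034869401710063947753624161543578708815337768524650259549788493141 : ℂ)/8136710554762015839452710044162948228364523252469555312101437673065551932747319032750262327835800) * x 4 * g17 +
        ((465574691734918855177339420604604436564492646877881011175337356020639335291465599612060873989 : ℂ)/1687029280968159496933828054022542786763818768941698394413216714515643005134886305089070242239459809300) * g18 +
        ((-28367189309995887542226099456240508931205218139308969343851120991078769295069398272968657203805437595794269399 : ℂ)/170393902810847977255388551640569689539381169748999022484682920987440469414913146140887179398929092468117783666692352264721118138310034) * g19 +
        ((-5726756785863910951581143411751770525677898973782991675914092543267019043335100033 : ℂ)/178027710874367729435413622365259389064877611807945296185749492397860610473541836465087794203127641499922) * g20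
    have g22 : x 4 ^ 6 = 0 := by
      linear_combination ((-1363358167148133159985 : ℂ)/216197280802375781194338869808522178847316) * x 3 * g21 +
        ((74349819677180679838403125123085664208009 : ℂ)/28231918788134177416359312469037749555162491986997542640) * x 4 ^ 2 * g17 +
        ((-808883402318725539734409964333448671457644489104902353 : ℂ)/5112144896577498446001696632851610580224562068614435284115845801915626501518458092880) * x 4 * g18 +
        ((-10702387942759016273744312217076627023028442151068355129020147374251445 : ℂ)/47809128727775463378874213268500564015351359093168540167349836184308817690298144931110223324704938647249983878218268) * x 4 * g19 +
        ((40441959043131171012545168288021716945562756886700160656261469357437716663054653078875 : ℂ)/8325540152880805997353652589841355660327692259489484228132459249602465383746188537281854864043944931484009377767961855890265273734) * x 4 * g20 +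
        ((2314988931466563339188724434811695927015531657586929115880874587841 : ℂ)/504482721553093889627489982602606539805761793701992229995254923157675061098045563648764) * x 4 * g21
    have p0 : x 0 ^ 6 = 0 := by
      linear_combination ((1 : ℂ)/3) * x 0 ^ 4 * h0 +
        ((-2 : ℂ)/9) * x 0 ^ 3 * x 1 * h0 +
        ((4 : ℂ)/27) * x 0 ^ 2 * x 1 ^ 2 * h0 +
        ((-8 : ℂ)/81) * x 0 * x 1 ^ 3 * h0 +
        ((16 : ℂ)/243) * x 1 ^ 4 * h0 +
        ((-32 : ℂ)/243) * x 1 ^ 4 * h2 +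
        ((32 : ℂ)/243) * x 1 ^ 4 * h4 +
        ((-1 : ℂ)/9) * x 0 ^ 2 * x 1 * x 2 * h0 +
        ((4 : ℂ)/27) * x 0 * x 1 ^ 2 * x 2 * h0 +
        ((-4 : ℂ)/27) * x 1 ^ 3 * x 2 * h0 +
        ((160 : ℂ)/243) * x 1 ^ 3 * x 2 * h2 +
        ((-176 : ℂ)/243) * x 1 ^ 3 * x 2 * h4 +
        ((-1 : ℂ)/9) * x 0 ^ 2 * x 2 ^ 2 * h0 +
        ((4 : ℂ)/27) * x 0 * x 1 * x 2 ^ 2 * h0 +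
        ((-1 : ℂ)/9) * x 1 ^ 2 * x 2 ^ 2 * h0 +
        ((-278 : ℂ)/243) * x 1 ^ 2 * x 2 ^ 2 * h2 +
        ((394 : ℂ)/243) * x 1 ^ 2 * x 2 ^ 2 * h4 +
        ((2 : ℂ)/27) * x 1 * x 2 ^ 3 * h0 +
        ((448 : ℂ)/243) * x 1 * x 2 ^ 3 * h2 +
        ((-865 : ℂ)/243) * x 1 * x 2 ^ 3 * h4 +
        ((1 : ℂ)/27) * x 2 ^ 4 * h0 +
        ((-950 : ℂ)/243) * x 2 ^ 4 * h2 +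
        ((1793 : ℂ)/243) * x 2 ^ 4 * h4 +
        ((1900 : ℂ)/243) * x 2 ^ 4 * g5 +
        ((-5171 : ℂ)/2187) * x 2 ^ 4 * g6 +
        ((-286 : ℂ)/164025) * x 2 ^ 3 * g7 +
        ((-2 : ℂ)/9) * x 0 ^ 3 * x 3 * h0 +
        ((8 : ℂ)/27) * x 0 ^ 2 * x 1 * x 3 * h0 +
        ((-8 : ℂ)/27) * x 0 * x 1 ^ 2 * x 3 * h0 +
        ((64 : ℂ)/243) * x 1 ^ 3 * x 3 * h0 +
        ((-160 : ℂ)/243) * x 1 ^ 3 * x 3 * h2 +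
        ((160 : ℂ)/243) * x 1 ^ 3 * x 3 * h4 +
        ((4 : ℂ)/27) * x 0 * x 1 * x 2 * x 3 * h0 +
        ((-8 : ℂ)/27) * x 1 ^ 2 * x 2 * x 3 * h0 +
        ((608 : ℂ)/243) * x 1 ^ 2 * x 2 * x 3 * h2 +
        ((-224 : ℂ)/81) * x 1 ^ 2 * x 2 * x 3 * h4 +
        ((4 : ℂ)/27) * x 0 * x 2 ^ 2 * x 3 * h0 +
        ((-8 : ℂ)/27) * x 1 * x 2 ^ 2 * x 3 * h0 +
        ((-982 : ℂ)/243) * x 1 * x 2 ^ 2 * x 3 * h2 +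
        ((490 : ℂ)/81) * x 1 * x 2 ^ 2 * x 3 * h4 +
        ((1856 : ℂ)/243) * x 2 ^ 3 * x 3 * h2 +
        ((-3536 : ℂ)/243) * x 2 ^ 3 * x 3 * h4 +
        ((-20582 : ℂ)/729) * x 2 ^ 3 * x 3 * g5 +
        ((50218 : ℂ)/6561) * x 2 ^ 3 * x 3 * g6 +
        ((796526 : ℂ)/4100625) * x 2 ^ 2 * x 3 * g7 +
        ((1 : ℂ)/27) * x 0 ^ 2 * x 3 ^ 2 * h0 +
        ((-4 : ℂ)/27) * x 0 * x 1 * x 3 ^ 2 * h0 +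
        ((20 : ℂ)/81) * x 1 ^ 2 * x 3 ^ 2 * h0 +
        ((-224 : ℂ)/243) * x 1 ^ 2 * x 3 ^ 2 * h2 +
        ((176 : ℂ)/243) * x 1 ^ 2 * x 3 ^ 2 * h4 +
        ((-2 : ℂ)/27) * x 1 * x 2 * x 3 ^ 2 * h0 +
        ((628 : ℂ)/243) * x 1 * x 2 * x 3 ^ 2 * h2 +
        ((-476 : ℂ)/243) * x 1 * x 2 * x 3 ^ 2 * h4 +
        ((-2 : ℂ)/27) * x 2 ^ 2 * x 3 ^ 2 * h0 +
        ((-1076 : ℂ)/243) * x 2 ^ 2 * x 3 ^ 2 * h2 +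
        ((1339 : ℂ)/243) * x 2 ^ 2 * x 3 ^ 2 * h4 +
        ((816148 : ℂ)/18225) * x 2 ^ 2 * x 3 ^ 2 * g5 +
        ((-1699649 : ℂ)/164025) * x 2 ^ 2 * x 3 ^ 2 * g6 +
        ((61190234 : ℂ)/102515625) * x 2 * x 3 ^ 2 * g7 +
        ((4 : ℂ)/81) * x 0 * x 3 ^ 3 * h0 +
        ((-8 : ℂ)/243) * x 1 * x 3 ^ 3 * h0 +
        ((-32 : ℂ)/243) * x 1 * x 3 ^ 3 * h2 +
        ((-64 : ℂ)/81) * x 1 * x 3 ^ 3 * h4 +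
        ((52 : ℂ)/243) * x 2 * x 3 ^ 3 * h2 +
        ((700 : ℂ)/243) * x 2 * x 3 ^ 3 * h4 +
        ((-43677968 : ℂ)/455625) * x 2 * x 3 ^ 3 * g5 +
        ((63423484 : ℂ)/4100625) * x 2 * x 3 ^ 3 * g6 +
        ((343676828 : ℂ)/94921875) * x 3 ^ 3 * g7 +
        ((-11 : ℂ)/243) * x 3 ^ 4 * h0 +
        ((74 : ℂ)/243) * x 3 ^ 4 * h2 +
        ((-310 : ℂ)/243) * x 3 ^ 4 * h4 +
        ((-732660404 : ℂ)/3796875) * x 3 ^ 4 * g5 +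
        ((922499327 : ℂ)/34171875) * x 3 ^ 4 * g6 +
        ((343562530801 : ℂ)/1237021875000) * x 3 ^ 3 * g8 +
        ((-2845222786277 : ℂ)/322862709375000) * x 3 ^ 3 * g9 +
        ((-2342375216498 : ℂ)/761001676171875) * x 3 ^ 3 * g10 +
        ((-12973256985634 : ℂ)/85639804721015625) * x 3 ^ 3 * g11 +
        ((-3769761733903 : ℂ)/21612780095625000) * x 3 ^ 3 * g12 +
        ((-64 : ℂ)/243) * x 1 ^ 3 * x 4 * h4 +
        ((352 : ℂ)/243) * x 1 ^ 2 * x 2 * x 4 * h4 +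
        ((-788 : ℂ)/243) * x 1 * x 2 ^ 2 * x 4 * h4 +
        ((1730 : ℂ)/243) * x 2 ^ 3 * x 4 * h4 +
        ((-8642 : ℂ)/6561) * x 2 ^ 3 * x 4 * g6 +
        ((-802 : ℂ)/10125) * x 2 ^ 2 * x 4 * g7 +
        ((-320 : ℂ)/243) * x 1 ^ 2 * x 3 * x 4 * h4 +
        ((448 : ℂ)/81) * x 1 * x 2 * x 3 * x 4 * h4 +
        ((-980 : ℂ)/81) * x 2 ^ 2 * x 3 * x 4 * h4 +
        ((-3208 : ℂ)/225) * x 2 ^ 2 * x 3 * x 4 * g5 +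
        ((678604 : ℂ)/164025) * x 2 ^ 2 * x 3 * x 4 * g6 +
        ((-28454366 : ℂ)/20503125) * x 2 * x 3 * x 4 * g7 +
        ((-32 : ℂ)/27) * x 1 * x 3 ^ 2 * x 4 * h4 +
        ((200 : ℂ)/81) * x 2 * x 3 ^ 2 * x 4 * h4 +
        ((-57702752 : ℂ)/455625) * x 2 * x 3 ^ 2 * x 4 * g5 +
        ((110013296 : ℂ)/4100625) * x 2 * x 3 ^ 2 * x 4 * g6 +
        ((-4726829416 : ℂ)/512578125) * x 3 ^ 2 * x 4 * g7 +
        ((704 : ℂ)/243) * x 3 ^ 3 * x 4 * h4 +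
        ((-323374048 : ℂ)/11390625) * x 3 ^ 3 * x 4 * g5 +
        ((-627381946 : ℂ)/102515625) * x 3 ^ 3 * x 4 * g6 +
        ((-796085287771463 : ℂ)/1278585810000000) * x 3 ^ 2 * x 4 * g8 +
        ((20100136211667887 : ℂ)/1668554482050000000) * x 3 ^ 2 * x 4 * g9 +
        ((2209546059311018 : ℂ)/245803541403515625) * x 3 ^ 2 * x 4 * g10 +
        ((-131916519793111607 : ℂ)/221293255399104375000) * x 3 ^ 2 * x 4 * g11 +
        ((161597679010026679 : ℂ)/1340338170410280000000) * x 3 ^ 2 * x 4 * g12 +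
        ((128 : ℂ)/243) * x 1 ^ 2 * x 4 ^ 2 * h4 +
        ((-704 : ℂ)/243) * x 1 * x 2 * x 4 ^ 2 * h4 +
        ((1576 : ℂ)/243) * x 2 ^ 2 * x 4 ^ 2 * h4 +
        ((-181124 : ℂ)/54675) * x 2 ^ 2 * x 4 ^ 2 * g6 +
        ((780656 : ℂ)/4100625) * x 2 * x 4 ^ 2 * g7 +
        ((640 : ℂ)/243) * x 1 * x 3 * x 4 ^ 2 * h4 +
        ((-896 : ℂ)/81) * x 2 * x 3 * x 4 ^ 2 * h4 +
        ((2787104 : ℂ)/91125) * x 2 * x 3 * x 4 ^ 2 * g5 +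
        ((-17384908 : ℂ)/4100625) * x 2 * x 3 * x 4 ^ 2 * g6 +
        ((803315722 : ℂ)/102515625) * x 3 * x 4 ^ 2 * g7 +
        ((448 : ℂ)/243) * x 3 ^ 2 * x 4 ^ 2 * h4 +
        ((2695639552 : ℂ)/2278125) * x 3 ^ 2 * x 4 ^ 2 * g5 +
        ((-24152402012 : ℂ)/102515625) * x 3 ^ 2 * x 4 ^ 2 * g6 +
        ((5022125154230882003 : ℂ)/15858555518592000000) * x 3 * x 4 ^ 2 * g8 +
        ((1186686154605213160249 : ℂ)/103477074758812800000000) * x 3 * x 4 ^ 2 * g9 +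
        ((-94553804588922688507 : ℂ)/7621876211840212500000) * x 3 * x 4 ^ 2 * g10 +
        ((35848825323442699777519 : ℂ)/13723722526830856920000000) * x 3 * x 4 ^ 2 * g11 +
        ((43205753061414524571491 : ℂ)/249367235928491773440000000) * x 3 * x 4 ^ 2 * g12 +
        ((-256 : ℂ)/243) * x 1 * x 4 ^ 3 * h4 +
        ((1408 : ℂ)/243) * x 2 * x 4 ^ 3 * h4 +
        ((-3851704 : ℂ)/820125) * x 2 * x 4 ^ 3 * g6 +
        ((-25675688 : ℂ)/20503125) * x 4 ^ 3 * g7 +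
        ((-1280 : ℂ)/243) * x 3 * x 4 ^ 3 * h4 +
        ((-102702752 : ℂ)/455625) * x 3 * x 4 ^ 3 * g5 +
        ((494407576 : ℂ)/6834375) * x 3 * x 4 ^ 3 * g6 +
        ((-58410840754215512947409 : ℂ)/2950452537123004416000000) * x 4 ^ 3 * g8 +
        ((-72291005702459442721224023 : ℂ)/3850340560945520762880000000) * x 4 ^ 3 * g9 +
        ((-521815597227298312738891 : ℂ)/283606965092089571040000000) * x 4 ^ 3 * g10 +
        ((1259673420695946472143311867 : ℂ)/2553271128671827268252160000000) * x 4 ^ 3 * g11 +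
        ((20435149711450791835217080063 : ℂ)/46394275510024037464965120000000) * x 4 ^ 3 * g12 +
        ((512 : ℂ)/243) * x 4 ^ 4 * h4 +
        ((-42407648 : ℂ)/4100625) * x 4 ^ 4 * g6 +
        ((102253742678461898291450425403 : ℂ)/102187623334957714059185258496000000) * x 4 ^ 2 * g13 +
        ((21965927702236057068885101228982923 : ℂ)/249729124867831087961107975523131266233856000000) * x 4 ^ 2 * g14 +
        ((7887859130458595889565999304300526332951 : ℂ)/2308446354580500776459500570467310694455803467955609600000) * x 4 ^ 2 * g15 +
        ((66981010961562076273383402812241022469101 : ℂ)/5982617895793076793958917199582063615699884514562894911488000000) * x 4 ^ 2 * g16 +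
        ((-4091136268695472839005390097370472117285671 : ℂ)/7930374215078402290316526505997123346342886656000000000) * x 4 ^ 2 * g17 +
        ((349735851336076273962416863849 : ℂ)/10578804201423856883358909606739196720042645507514000000000) * x 4 * g18 +
        ((4409710260590867971570277460352958184164534663 : ℂ)/896998884074343468786767547359571054024918599148829938078719881685269415873470764960000000) * x 4 * g19 +
        ((-701202898116549564391449382571811390972102418293695338995630697 : ℂ)/562336138110830119064114067373861030409164815857896107866302486983836391950272938256405208863060128000000) * x 4 * g20 +
        ((-292794404604718072056688785833938268328116435172957411485627537 : ℂ)/645219283148728938010743088269981668300086767853252281142248034591852450440000000) * x 4 * g21 +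
        ((292792030334079062872272018610483 : ℂ)/2972461643924717322057296250000) * g22
    have p1 : x 1 ^ 6 = 0 := by
      linear_combination (1 : ℂ) * x 1 ^ 4 * h4 +
        (-1 : ℂ) * x 1 ^ 2 * x 3 ^ 2 * h4 +
        (1 : ℂ) * x 3 ^ 4 * h4 +
        ((-1 : ℂ)/3348864) * x 3 ^ 3 * g12 +
        (-2 : ℂ) * x 1 ^ 3 * x 4 * h4 +
        (4 : ℂ) * x 1 * x 3 ^ 2 * x 4 * h4 +
        ((-237521 : ℂ)/9698310144) * x 3 ^ 2 * x 4 * g8 +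
        ((-525977011 : ℂ)/63281473689600) * x 3 ^ 2 * x 4 * g9 +
        ((-275908127 : ℂ)/4661163451800) * x 3 ^ 2 * x 4 * g10 +
        ((147231833531 : ℂ)/8392751612173440) * x 3 ^ 2 * x 4 * g11 +
        ((22169074879 : ℂ)/152500698500014080) * x 3 ^ 2 * x 4 * g12 +
        (4 : ℂ) * x 1 ^ 2 * x 4 ^ 2 * h4 +
        (-12 : ℂ) * x 3 ^ 2 * x 4 ^ 2 * h4 +
        ((2492787754235 : ℂ)/1804351205670912) * x 3 * x 4 ^ 2 * g8 +
        ((-2198188582948943 : ℂ)/11773391617002700800) * x 3 * x 4 ^ 2 * g9 +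
        ((58233886648349 : ℂ)/867200137880486400) * x 3 * x 4 ^ 2 * g10 +
        ((-38480336051983817 : ℂ)/1561454651941644165120) * x 3 * x 4 ^ 2 * g11 +
        ((156616953241180427 : ℂ)/28372449954530619555840) * x 3 * x 4 ^ 2 * g12 +
        (-8 : ℂ) * x 1 * x 4 ^ 3 * h4 +
        ((120202758232998775 : ℂ)/335695933112661835776) * x 4 ^ 3 * g8 +
        ((303869031329739715109 : ℂ)/2190415963560118478438400) * x 4 ^ 3 * g9 +
        ((41999281443678582913 : ℂ)/161340851252388733747200) * x 4 ^ 3 * g10 +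
        ((-21837499888949759279389 : ℂ)/290505515084439013632245760) * x 4 ^ 3 * g11 +
        ((20733201822750133179079 : ℂ)/5278637569140512707124920320) * x 4 ^ 3 * g12 +
        (16 : ℂ) * x 4 ^ 4 * h4 +
        ((-377977457199976591587037 : ℂ)/11626680699444077688511744966656) * x 4 ^ 2 * g13 +
        ((-79797795322970324408399782669 : ℂ)/28413624873851003785797174103965157402607616) * x 4 ^ 2 * g14 +
        ((23672557447240986781231460842897819 : ℂ)/1313249481716907108385849213421403417290412639548080128) * x 4 ^ 2 * g15 +
        ((-2233335805627035916111297449056934971 : ℂ)/680688969476901181890436801374670349164075749212489376595968) * x 4 ^ 2 * g16 +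
        ((2910340967651303498438731939993238749 : ℂ)/180460071027561865450758292047578984592335909683200) * x 4 ^ 2 * g17 +
        ((-63882178800046245725011 : ℂ)/240726566716845098856878298606687498696081533326540800) * x 4 * g18 +
        ((597602652792073395249445304880609825963911 : ℂ)/918526857292127712037649968496200759321516645528401856592609158845715881854434063319040) * x 4 * g19 +
        ((132827994773785540316355231300415205982124668471249541685 : ℂ)/21327118719462594145246400184845692412554991534758726461299768395238832050262203287946627180584206336) * x 4 * g20 +
        ((-264760496450265302815438781634301046630057464059204941897 : ℂ)/73411616216033159169222324709829025371032094475747815098851331935784101027840) * x 4 * g21 +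
        ((30851618693825853285374601 : ℂ)/112733360125144834732839680) * g22
    have p2 : x 2 ^ 6 = 0 := by
      linear_combination ((1 : ℂ)/75) * x 2 ^ 3 * g7 +
        ((452 : ℂ)/5625) * x 2 ^ 2 * x 3 * g7 +
        ((-104 : ℂ)/25) * x 2 ^ 2 * x 3 ^ 2 * g5 +
        ((127 : ℂ)/225) * x 2 ^ 2 * x 3 ^ 2 * g6 +
        ((63943 : ℂ)/140625) * x 2 * x 3 ^ 2 * g7 +
        ((-16636 : ℂ)/625) * x 2 * x 3 ^ 3 * g5 +
        ((21068 : ℂ)/5625) * x 2 * x 3 ^ 3 * g6 +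
        ((9178112 : ℂ)/3515625) * x 3 ^ 3 * g7 +
        ((-2346224 : ℂ)/15625) * x 3 ^ 4 * g5 +
        ((2965987 : ℂ)/140625) * x 3 ^ 4 * g6 +
        ((163735751 : ℂ)/848437500) * x 3 ^ 3 * g8 +
        ((-494445809 : ℂ)/73814062500) * x 3 ^ 3 * g9 +
        ((-758767732 : ℂ)/347966015625) * x 3 ^ 3 * g10 +
        ((-1229993652 : ℂ)/13052858515625) * x 3 ^ 3 * g11 +
        ((-58825931971 : ℂ)/474354570000000) * x 3 ^ 3 * g12 +
        ((-74 : ℂ)/1125) * x 2 ^ 2 * x 4 * g7 +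
        ((-296 : ℂ)/25) * x 2 ^ 2 * x 3 * x 4 * g5 +
        ((458 : ℂ)/225) * x 2 ^ 2 * x 3 * x 4 * g6 +
        ((-19532 : ℂ)/28125) * x 2 * x 3 * x 4 * g7 +
        ((-31304 : ℂ)/625) * x 2 * x 3 ^ 2 * x 4 * g5 +
        ((5138 : ℂ)/625) * x 2 * x 3 ^ 2 * x 4 * g6 +
        ((-1389194 : ℂ)/234375) * x 3 ^ 2 * x 4 * g7 +
        ((-2947296 : ℂ)/15625) * x 3 ^ 3 * x 4 * g5 +
        ((4713958 : ℂ)/140625) * x 3 ^ 3 * x 4 * g6 +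
        ((-3506973919897 : ℂ)/9354080000000) * x 3 ^ 2 * x 4 * g8 +
        ((239801748423059 : ℂ)/36621223200000000) * x 3 ^ 2 * x 4 * g9 +
        ((14730243407263 : ℂ)/2697432553125000) * x 3 ^ 2 * x 4 * g10 +
        ((-1685081354899099 : ℂ)/4856916442230000000) * x 3 ^ 2 * x 4 * g11 +
        ((1657146793744609 : ℂ)/88252719039360000000) * x 3 ^ 2 * x 4 * g12 +
        ((-44 : ℂ)/225) * x 2 ^ 2 * x 4 ^ 2 * g6 +
        ((604 : ℂ)/1875) * x 2 * x 4 ^ 2 * g7 +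
        ((7008 : ℂ)/125) * x 2 * x 3 * x 4 ^ 2 * g5 +
        ((-74516 : ℂ)/5625) * x 2 * x 3 * x 4 ^ 2 * g6 +
        ((638344 : ℂ)/140625) * x 3 * x 4 ^ 2 * g7 +
        ((1466704 : ℂ)/3125) * x 3 ^ 2 * x 4 ^ 2 * g5 +
        ((-14054824 : ℂ)/140625) * x 3 ^ 2 * x 4 ^ 2 * g6 +
        ((233224546153029413 : ℂ)/1044184725504000000) * x 3 * x 4 ^ 2 * g8 +
        ((58450524261948540079 : ℂ)/6813305333913600000000) * x 3 * x 4 ^ 2 * g9 +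
        ((-3988034664252347197 : ℂ)/501851931643800000000) * x 3 * x 4 ^ 2 * g10 +
        ((1581736745729540614249 : ℂ)/903619590244007040000000) * x 3 * x 4 ^ 2 * g11 +
        ((670332486097707741461 : ℂ)/16419241871834849280000000) * x 3 * x 4 ^ 2 * g12 +
        ((88 : ℂ)/125) * x 2 * x 4 ^ 3 * g6 +
        ((-43376 : ℂ)/28125) * x 4 ^ 3 * g7 +
        ((-173504 : ℂ)/625) * x 3 * x 4 ^ 3 * g5 +
        ((606952 : ℂ)/9375) * x 3 * x 4 ^ 3 * g6 +
        ((-6413497003204705204439 : ℂ)/194268479810568192000000) * x 4 ^ 3 * g8 +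
        ((-2724857477431329010292033 : ℂ)/253520366152791490560000000) * x 4 ^ 3 * g9 +
        ((-39037058456513787774061 : ℂ)/18673709635693140480000000) * x 4 ^ 3 * g10 +
        ((129045389026069410222877757 : ℂ)/168116617525717021777920000000) * x 4 ^ 3 * g11 +
        ((954957924302567085082957273 : ℂ)/3054767111771130038845440000000) * x 4 ^ 3 * g12 +
        ((-21296 : ℂ)/5625) * x 4 ^ 4 * g6 +
        ((5806667495143246526113020413 : ℂ)/6728403182548656069740593152000000) * x 4 ^ 2 * g13 +
        ((1315210724466727072416793059980333 : ℂ)/16443069950145256820484475754609466089472000000) * x 4 ^ 2 * g14 +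
        ((249783786608326959693979663635892923521 : ℂ)/151996467791308693100214029331180951075279240688435200000) * x 4 ^ 2 * g15 +
        ((-3462355656591977081596884541840493920229 : ℂ)/393917227706540035816225000795526822432914206720190611456000000) * x 4 ^ 2 * g16 +
        ((-71562207642965177363031500150615635296241 : ℂ)/522164557371417434753351539489522524862083072000000000) * x 4 ^ 2 * g17 +
        ((11344082027450763043619751679 : ℂ)/696546778694574938821985817727683734653013695968000000000) * x 4 * g18 +
        ((-3941412452909709542376141121992622552637877429 : ℂ)/1594664682798832833398697861972570762710966398486808778806613122996034517108392471040000000) * x 4 * g19 +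
        ((-92412211320518322056175449859193174232453150598684064288952061 : ℂ)/111078743330534344506491667629404647982057247576868366985936293725202250261782308791388683232209408000000) * x 4 * g20 +
        ((-16538205312081854614179364747389610587893059002432103747970327 : ℂ)/42483574199093263408114771244114019311939869488279985589613039314689873280000000) * x 4 * g21 +
        ((141110889598511726755756026609837 : ℂ)/1761458751955388042700620000000) * g22
    have p3 : x 3 ^ 6 = 0 := by
      linear_combination ((1 : ℂ)/3348864) * x 3 ^ 3 * g12 +
        ((237521 : ℂ)/9698310144) * x 3 ^ 2 * x 4 * g8 +
        ((525977011 : ℂ)/63281473689600) * x 3 ^ 2 * x 4 * g9 +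
        ((-27582673 : ℂ)/4661163451800) * x 3 ^ 2 * x 4 * g10 +
        ((14603135557 : ℂ)/8392751612173440) * x 3 ^ 2 * x 4 * g11 +
        ((56243459393 : ℂ)/152500698500014080) * x 3 ^ 2 * x 4 * g12 +
        ((289452922117 : ℂ)/1804351205670912) * x 3 * x 4 ^ 2 * g8 +
        ((287810195299919 : ℂ)/11773391617002700800) * x 3 * x 4 ^ 2 * g9 +
        ((-8816303589917 : ℂ)/867200137880486400) * x 3 * x 4 ^ 2 * g10 +
        ((5228657029330889 : ℂ)/1561454651941644165120) * x 3 * x 4 ^ 2 * g11 +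
        ((24405606781853941 : ℂ)/28372449954530619555840) * x 3 * x 4 ^ 2 * g12 +
        ((91939680457957001 : ℂ)/335695933112661835776) * x 4 ^ 3 * g8 +
        ((12614440974127139423 : ℂ)/438083192712023695687680) * x 4 ^ 3 * g9 +
        ((46840921861049011 : ℂ)/32268170250477746749440) * x 4 ^ 3 * g10 +
        ((20600815997345565469 : ℂ)/290505515084439013632245760) * x 4 ^ 3 * g11 +
        ((7725831534176854486841 : ℂ)/5278637569140512707124920320) * x 4 ^ 3 * g12 +
        ((4305558714939483521245 : ℂ)/11626680699444077688511744966656) * x 4 ^ 2 * g13 +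
        ((3301578297438687928481107213 : ℂ)/28413624873851003785797174103965157402607616) * x 4 ^ 2 * g14 +
        ((6084640982431215379032663111800933 : ℂ)/1313249481716907108385849213421403417290412639548080128) * x 4 ^ 2 * g15 +
        ((-160882723225946029483714433320533445 : ℂ)/680688969476901181890436801374670349164075749212489376595968) * x 4 ^ 2 * g16 +
        ((2231764123915255239093092437434703279 : ℂ)/902300355137809327253791460237894922961679548416000) * x 4 ^ 2 * g17 +
        ((-95205008380145199055201 : ℂ)/1203632833584225494284391493033437493480407666632704000) * x 4 * g18 +
        ((161822479564437868663661342902032390161017 : ℂ)/918526857292127712037649968496200759321516645528401856592609158845715881854434063319040) * x 4 * g19 +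
        ((26626586540187240075173762928958502577583566886998764491 : ℂ)/21327118719462594145246400184845692412554991534758726461299768395238832050262203287946627180584206336) * x 4 * g20 +
        ((-49856123511879087303631293635315646534138164133885298571 : ℂ)/14682323243206631833844464941965805074206418895149563019770266387156820205568) * x 4 * g21 +
        ((14422362777124386202015307 : ℂ)/22546672025028966946567936) * g22
    have p4 : x 4 ^ 6 = 0 := by
      linear_combination (1 : ℂ) * g22
    have e0 : x 0 = 0 := pow_eq_zero_iff (by norm_num) |>.mp p0
    have e1 : x 1 = 0 := pow_eq_zero_iff (by norm_num) |>.mp p1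
    have e2 : x 2 = 0 := pow_eq_zero_iff (by norm_num) |>.mp p2
    have e3 : x 3 = 0 := pow_eq_zero_iff (by norm_num) |>.mp p3
    have e4 : x 4 = 0 := pow_eq_zero_iff (by norm_num) |>.mp p4
    funext i
    fin_cases i <;> simp only [Pi.zero_apply] <;>
      first | exact e0 | exact e1 | exact e2 | exact e3 | exact e4
  · rintro ⟨x, y, hli, hz⟩
    have hx : x ≠ 0 := by simpa using hli.ne_zero 0
    have hy : y ≠ 0 := by simpa using hli.ne_zero 1
    have hxy : x ≠ y := by
      intro he
      have h01 : (0 : Fin 2) = 1 := hli.injective (by simpa using he)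
      exact absurd h01 (by decide)
    obtain ⟨s, t, hne⟩ := H2key x y ⟨hx, hy, hxy⟩
    apply hne
    have hev : ∀ v : Fin 5 → ZMod 2,
        eval v (H2.map (Int.castRingHom (ZMod 2))) = H2fun v := by
      intro v
      simp only [H2, H2fun, map_add, map_mul, map_pow, MvPolynomial.map_X,
        eval_add, eval_mul, eval_pow, eval_X]
    exact (hev (s • x + t • y)).symm.trans (hz s t)
end
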